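/- arXiv:1705.05675 — 2 statements merged into one kernel-verified Lean document; each statement's English description precedes it below -/
import Mathlib

section
/- For all natural numbers a, b, c, n, p, we have ∑_{k=0}^{n} C(a,k)·C(b,n−k)·C(k,c)·C(p+k, a+b−c) = C(n+p−b, n−c)·C(p+c, a+b−n)·C(a,c). -/
/-- Binomial coefficient for integers: `C x y` is the usual binomial coefficient
when `0 ≤ y ≤ x`, and `0` otherwise. -/
def C (x y : ℤ) : ℤ := if 0 ≤ y ∧ y ≤ x then (x.toNat.choose y.toNat : ℤ) else 0

/-!
Trinomial revision `C(a,k) C(k,c) = C(a,c) C(a-c,k-c)` reduces the sum, after the shift `k = c + j`,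
to `∑ⱼ C(A,j) C(b,m-j) C(q+j,A+b) = C(m+q-b,m) C(q,A+b-m)`. Expanding `C(q+j,A+b)` by
Vandermonde as `∑ₜ C(j,t) C(q,A+b-t)` and swapping the sums, the inner sum over `j` collapses
(trinomial revision, then Vandermonde) to `C(A,t) C(A-t+b,m-t)`; reflecting `t ↦ m - t`, one more
trinomial revision and Vandermonde finish. When `c ≤ a`, `c ≤ n`, `n ≤ a+b`, `b ≤ n+p` fail,
both sides vanish termwise.
-/

open Finset

theorem Finset.sum_range_eq_sum_range_shift {M : Type*} [AddCommMonoid M] {f : ℕ → M} {c : ℕ}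
    (N : ℕ) (hf : ∀ k < c, f k = 0) :
    ∑ k ∈ range N, f k = ∑ j ∈ range (N - c), f (c + j) := by
  rcases le_or_gt c N with hcN | hNc
  · conv_lhs => rw [← Nat.add_sub_cancel' hcN]
    rw [sum_range_add, sum_eq_zero fun k hk => hf k (mem_range.1 hk), zero_add]
  · rw [Nat.sub_eq_zero_of_le hNc.le, range_zero, sum_empty]
    exact sum_eq_zero fun k hk => hf k ((mem_range.1 hk).trans hNc)

namespace Nat

theorem add_choose_eq_sum_range (x y k : ℕ) :
    (x + y).choose k = ∑ i ∈ range (k + 1), x.choose i * y.choose (k - i) := by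
  rw [add_choose_eq, Finset.Nat.sum_antidiagonal_eq_sum_range_succ_mk]

theorem sum_range_choose_mul_choose_mul_choose {A b m t : ℕ} (htm : t ≤ m) :
    ∑ j ∈ range (m + 1), A.choose j * j.choose t * b.choose (m - j)
      = A.choose t * (A - t + b).choose (m - t) := by
  rw [sum_range_eq_sum_range_shift (m + 1) fun j hj => by rw [choose_eq_zero_of_lt hj, mul_zero,
    zero_mul], show m + 1 - t = m - t + 1 by omega, add_choose_eq_sum_range, mul_sum]
  refine sum_congr rfl fun i _ => ?_
  rw [choose_mul (le_add_right t i), Nat.add_sub_cancel_left, show m - (t + i) = m - t - i by omega,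
    mul_assoc]

theorem sum_range_choose_mul_choose_mul_add_choose {A b m : ℕ} (q : ℕ) (hm : m ≤ A + b) :
    ∑ j ∈ range (m + 1), A.choose j * b.choose (m - j) * (q + j).choose (A + b)
      = (m + q - b).choose m * q.choose (A + b - m) := by
  have hvandermonde : ∀ j ∈ range (m + 1),
      (q + j).choose (A + b) = ∑ t ∈ range (m + 1), j.choose t * q.choose (A + b - t) := by
    intro j hj
    rw [add_comm, add_choose_eq_sum_range]
    refine (sum_subset (range_subset_range.2 (by omega)) fun t _ ht => ?_).symm
    rw [choose_eq_zero_of_lt (by simp at hj ht; omega), zero_mul]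
  have hreflect : ∀ u ≤ m, A.choose (m - u) * (A - (m - u) + b).choose (m - (m - u))
      * q.choose (A + b - (m - u))
        = q.choose (A + b - m) * ((q - (A + b - m)).choose u * A.choose (m - u)) := by
    intro u hu
    rcases le_or_gt (m - u) A with hA | hA
    · rw [show A - (m - u) + b = A + b - m + u by omega, show m - (m - u) = u by omega,
        show A + b - (m - u) = A + b - m + u by omega, ← choose_symm_add, mul_right_comm,
        mul_assoc, choose_mul (le_add_right _ _), Nat.add_sub_cancel_left]
      ring
    · rw [choose_eq_zero_of_lt hA]
      ring
  calc _ = ∑ t ∈ range (m + 1),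
        (∑ j ∈ range (m + 1), A.choose j * j.choose t * b.choose (m - j))
          * q.choose (A + b - t) := by
        simp_rw [sum_mul]
        rw [sum_comm]
        refine sum_congr rfl fun j hj => ?_
        rw [hvandermonde j hj, mul_sum]
        exact sum_congr rfl fun t _ => by ring
    _ = ∑ t ∈ range (m + 1), A.choose t * (A - t + b).choose (m - t) * q.choose (A + b - t) :=
        sum_congr rfl fun t ht => by
          rw [sum_range_choose_mul_choose_mul_choose (mem_range_succ_iff.1 ht)]
    _ = ∑ u ∈ range (m + 1),
        q.choose (A + b - m) * ((q - (A + b - m)).choose u * A.choose (m - u)) := by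
        rw [← sum_range_reflect]
        exact sum_congr rfl fun u hu => by
          rw [show m + 1 - 1 - u = m - u by omega, hreflect u (mem_range_succ_iff.1 hu)]
    _ = q.choose (A + b - m) * (q - (A + b - m) + A).choose m := by
        rw [← mul_sum, add_choose_eq_sum_range]
    _ = _ := by
        rcases le_or_gt (A + b - m) q with hq | hq
        · rw [show q - (A + b - m) + A = m + q - b by omega, mul_comm]
        · rw [choose_eq_zero_of_lt hq, zero_mul, mul_zero]

theorem sum_range_choose_mul_choose_mul_choose_mul_add_choose {a b c n : ℕ} (p : ℕ)
    (hca : c ≤ a) (hcn : c ≤ n) (hnab : n ≤ a + b) :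
    ∑ k ∈ range (n + 1), a.choose k * b.choose (n - k) * k.choose c * (p + k).choose (a + b - c)
      = (n + p - b).choose (n - c) * (p + c).choose (a + b - n) * a.choose c := by
  rw [sum_range_eq_sum_range_shift (n + 1) fun k hk => by rw [choose_eq_zero_of_lt hk, mul_zero,
    zero_mul], show n + 1 - c = n - c + 1 by omega]
  calc _ = a.choose c * ∑ j ∈ range (n - c + 1),
        (a - c).choose j * b.choose (n - c - j) * (p + c + j).choose (a - c + b) := by
        rw [mul_sum]
        refine sum_congr rfl fun j _ => ?_
        rw [mul_right_comm (a.choose _), choose_mul (le_add_right c j), Nat.add_sub_cancel_left,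
          show n - (c + j) = n - c - j by omega, show p + (c + j) = p + c + j by omega,
          show a + b - c = a - c + b by omega]
        ring
    _ = _ := by
        rw [sum_range_choose_mul_choose_mul_add_choose (p + c) (by omega),
          show n - c + (p + c) - b = n + p - b by omega,
          show a - c + b - (n - c) = a + b - n by omega]
        ring

end Nat

theorem C_natCast (x y : ℕ) : C x y = x.choose y := by
  unfold C
  split_ifs with h
  · simp
  · rw [Nat.choose_eq_zero_of_lt (by omega)]
    simp

theorem C_eq_zero_of_neg {x y : ℤ} (h : y < 0) : C x y = 0 :=
  if_neg fun hy => by omega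

theorem C_eq_zero_of_lt {x y : ℤ} (h : x < y) : C x y = 0 :=
  if_neg fun hy => by omega

theorem C_mul_C_eq_zero_of_lt {x k c : ℤ} (h : x < c) : C x k * C k c = 0 := by
  rcases lt_or_ge k c with hkc | hck
  · rw [C_eq_zero_of_lt hkc, mul_zero]
  · rw [C_eq_zero_of_lt (h.trans_le hck), zero_mul]

theorem C_mul_C_eq_zero_of_add_lt {x y k l : ℤ} (h : x + y < k + l) : C x k * C y l = 0 := by
  rcases lt_or_ge x k with hxk | hkx
  · rw [C_eq_zero_of_lt hxk, zero_mul]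
  · rw [C_eq_zero_of_lt (by omega : y < l), mul_zero]

section

variable {a b c n p : ℕ}

theorem sum_C_mul_eq_of_le (hca : c ≤ a) (hcn : c ≤ n) (hnab : n ≤ a + b)
    (hbnp : b ≤ n + p) :
    ∑ k ∈ range (n + 1),
        C a k * C b ((n : ℤ) - k) * C k c * C ((p : ℤ) + k) ((a : ℤ) + b - c)
      = C ((n : ℤ) + p - b) ((n : ℤ) - c) * C ((p : ℤ) + c) ((a : ℤ) + b - n) * C a c := by
  have hsummand : ∀ k ∈ range (n + 1),
      C a k * C b ((n : ℤ) - k) * C k c * C ((p : ℤ) + k) ((a : ℤ) + b - c)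
        = ((a.choose k * b.choose (n - k) * k.choose c * (p + k).choose (a + b - c) : ℕ) : ℤ) := by
    intro k hk
    have hkn := mem_range_succ_iff.1 hk
    rw [show (n : ℤ) - k = ((n - k : ℕ) : ℤ) by omega,
      show (p : ℤ) + k = ((p + k : ℕ) : ℤ) by omega,
      show (a : ℤ) + b - c = ((a + b - c : ℕ) : ℤ) by omega]
    simp only [C_natCast, Nat.cast_mul]
  rw [sum_congr rfl hsummand, ← Nat.cast_sum,
    Nat.sum_range_choose_mul_choose_mul_choose_mul_add_choose p hca hcn hnab,
    show (n : ℤ) + p - b = ((n + p - b : ℕ) : ℤ) by omega,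
    show (n : ℤ) - c = ((n - c : ℕ) : ℤ) by omega,
    show (p : ℤ) + c = ((p + c : ℕ) : ℤ) by omega,
    show (a : ℤ) + b - n = ((a + b - n : ℕ) : ℤ) by omega]
  simp only [C_natCast, Nat.cast_mul]

theorem C_summand_eq_zero {k : ℕ} (hkn : k ≤ n)
    (h : ¬(c ≤ a ∧ c ≤ n ∧ n ≤ a + b ∧ b ≤ n + p)) :
    C a k * C b ((n : ℤ) - k) * C k c * C ((p : ℤ) + k) ((a : ℤ) + b - c) = 0 := by
  rcases lt_or_ge a c with hac | hca
  · rw [mul_right_comm (C a k), C_mul_C_eq_zero_of_lt (by omega)]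
    ring
  rcases lt_or_ge n c with hnc | hcn
  · rw [C_eq_zero_of_lt (by omega : (k : ℤ) < c)]
    ring
  rcases lt_or_ge (a + b) n with habn | hnab
  · rw [C_mul_C_eq_zero_of_add_lt (by omega : (a : ℤ) + b < k + (n - k))]
    ring
  · rw [C_eq_zero_of_lt (by omega : (p : ℤ) + k < a + b - c), mul_zero]

theorem C_rhs_eq_zero (h : ¬(c ≤ a ∧ c ≤ n ∧ n ≤ a + b ∧ b ≤ n + p)) :
    C ((n : ℤ) + p - b) ((n : ℤ) - c) * C ((p : ℤ) + c) ((a : ℤ) + b - n) * C a c = 0 := by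
  rcases lt_or_ge a c with hac | hca
  · rw [C_eq_zero_of_lt (by omega : (a : ℤ) < c), mul_zero]
  rcases lt_or_ge n c with hnc | hcn
  · rw [C_eq_zero_of_neg (by omega : (n : ℤ) - c < 0), zero_mul, zero_mul]
  rcases lt_or_ge (a + b) n with habn | hnab
  · rw [C_eq_zero_of_neg (by omega : (a : ℤ) + b - n < 0), mul_zero, zero_mul]
  · rw [C_eq_zero_of_lt (by omega : (n : ℤ) + p - b < n - c), zero_mul, zero_mul]

end

theorem stmt_7 (a b c n p : ℕ) :
    ∑ k ∈ Finset.range (n + 1), C a k * C b ((n : ℤ) - k) * C k c * C ((p : ℤ) + k) ((a : ℤ) + b - c) = C ((n : ℤ) + p - b) ((n : ℤ) - c) * C ((p : ℤ) + c) ((a : ℤ) + b - n) * C a c := by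
  by_cases h : c ≤ a ∧ c ≤ n ∧ n ≤ a + b ∧ b ≤ n + p
  · obtain ⟨hca, hcn, hnab, hbnp⟩ := h
    exact sum_C_mul_eq_of_le hca hcn hnab hbnp
  · rw [C_rhs_eq_zero h]
    exact sum_eq_zero fun k hk => C_summand_eq_zero (mem_range_succ_iff.1 hk) h
end

section
/- For all natural numbers a, b, c, n, p, we have ∑_{k=0}^{n} C(a,k)·C(b,n−k)·C(k,c)·C(p−k, a+b−c) = C(p−n, a+b−n)·C(p−a, n−c)·C(a,c). -/
open Finset

theorem C_eq_zero_iff {x y : ℤ} : C x y = 0 ↔ y < 0 ∨ x < y := by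
  unfold C
  split_ifs with h
  · simp only [Nat.cast_eq_zero, (Nat.choose_pos (show y.toNat ≤ x.toNat by omega)).ne',
      false_iff]
    omega
  · simp only [true_iff]
    omega

theorem C_natCast_s8 (m k : ℕ) : C m k = m.choose k := by
  unfold C
  split_ifs with h
  · simp
  · rw [Nat.choose_eq_zero_of_lt (by omega), Nat.cast_zero]

theorem C_symm (x y : ℤ) : C x y = C x (x - y) := by
  unfold C
  split_ifs with h h' h'
  · rw [show (x - y).toNat = x.toNat - y.toNat by omega, Nat.choose_symm (by omega)]
  all_goals first | rfl | omega

theorem C_mul (x y z : ℤ) : C x y * C y z = C x z * C (x - z) (y - z) := by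
  unfold C
  split_ifs <;> try simp only [mul_zero, zero_mul]
  all_goals try omega
  rw [show (x - z).toNat = x.toNat - z.toNat by omega,
    show (y - z).toNat = y.toNat - z.toNat by omega]
  exact_mod_cast Nat.choose_mul (by omega)

theorem sum_C_mul_C_sub_comp {ι : Type*} {s : Finset ι} {e : ι → ℤ} (he : Set.InjOn e s)
    {x y : ℤ} (hx : 0 ≤ x) (hy : 0 ≤ y) (N : ℤ)
    (hs : ∀ j, 0 ≤ j → j ≤ x → j ≤ N → ∃ i ∈ s, e i = j) :
    ∑ i ∈ s, C x (e i) * C y (N - e i) = C (x + y) N := by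
  classical
  rw [← sum_image (f := fun j => C x j * C y (N - j)) he]
  obtain hN | hN := lt_or_ge N 0
  · rw [C_eq_zero_iff.2 (Or.inl hN)]
    refine sum_eq_zero fun j _ => ?_
    by_contra h
    simp only [mul_eq_zero, C_eq_zero_iff, not_or] at h
    omega
  lift N to ℕ using hN
  lift x to ℕ using hx
  lift y to ℕ using hy
  have hvand : ∑ j ∈ (range (N + 1)).image (↑), C x j * C y (N - j) = C (x + y) N := by
    rw [sum_image Nat.cast_injective.injOn, ← Nat.cast_add, C_natCast_s8, Nat.add_choose_eq,
      Nat.sum_antidiagonal_eq_sum_range_succ_mk, Nat.cast_sum]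
    refine sum_congr rfl fun i hi => ?_
    rw [← Nat.cast_sub (by simp at hi; omega), C_natCast_s8, C_natCast_s8, Nat.cast_mul]
  rw [← hvand]
  refine sum_congr_of_eq_on_inter (fun j _ hj => ?_) (fun j _ hj => ?_) fun _ _ _ => rfl
  · by_contra h
    simp only [mul_eq_zero, C_eq_zero_iff, not_or] at h
    exact hj (mem_image.2 ⟨j.toNat, by simp; omega, by omega⟩)
  · by_contra h
    simp only [mul_eq_zero, C_eq_zero_iff, not_or] at h
    obtain ⟨i, hi, rfl⟩ := hs j (by omega) (by omega) (by omega)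
    exact hj (mem_image_of_mem e hi)

theorem sum_C_mul_C_mul_C_mul_C_of_le {a b c n p : ℕ} (hca : c ≤ a) (hp : a + b ≤ p)
    (hn : n ≤ a + b) :
    ∑ k ∈ range (n + 1), C a k * C b (n - k : ℤ) * C k c * C (p - k : ℤ) (a + b - c : ℤ) =
      C (p - n : ℤ) (a + b - n : ℤ) * C (p - a : ℤ) (n - c : ℤ) * C a c := by
  have hcast : Set.InjOn (Nat.cast : ℕ → ℤ) ↑(range (n + 1)) := Nat.cast_injective.injOn
  calc _ = ∑ k ∈ range (n + 1), ∑ i ∈ range (n + 1), C a k * C b (n - k : ℤ) * C k c *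
          (C (n - k : ℤ) i * C (p - n : ℤ) ((a + b - c : ℤ) - i)) := by
        refine sum_congr rfl fun k hk => ?_
        rw [← mul_sum, sum_C_mul_C_sub_comp hcast (by simp at hk; omega) (by omega) _
          fun j _ _ _ => ⟨j.toNat, by simp at hk ⊢; omega, by omega⟩,
          show (n - k + (p - n) : ℤ) = p - k by ring]
    _ = ∑ i ∈ range (n + 1), C a c * C b i * C (p - n : ℤ) (a + b - c - i : ℤ) *
          ∑ k ∈ range (n + 1), C (a - c : ℤ) (k - c : ℤ) *
            C (b - i : ℤ) ((n - c - i : ℤ) - (k - c : ℤ)) := by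
        rw [sum_comm]
        refine sum_congr rfl fun i _ => ?_
        rw [mul_sum]
        refine sum_congr rfl fun k _ => ?_
        rw [show (n - c - i : ℤ) - (k - c) = (n - k : ℤ) - i by ring]
        linear_combination
          (C b (n - k : ℤ) * C (n - k : ℤ) i * C (p - n : ℤ) (a + b - c - i : ℤ)) *
            C_mul a k c +
          (C a c * C (a - c : ℤ) (k - c : ℤ) * C (p - n : ℤ) (a + b - c - i : ℤ)) *
            C_mul b (n - k : ℤ) i
    _ = ∑ i ∈ range (n + 1), C a c * C (p - n : ℤ) (a + b - n : ℤ) *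
          (C b i * C (p - a - b : ℤ) ((n - c : ℤ) - i)) := by
        refine sum_congr rfl fun i _ => ?_
        obtain hib | hib := le_or_gt i b
        · have hshift : Set.InjOn (fun k : ℕ => (k - c : ℤ)) ↑(range (n + 1)) :=
            fun k _ l _ h => by simpa using h
          rw [sum_C_mul_C_sub_comp hshift (by omega) (by omega) _
            fun j _ _ _ => ⟨(j + c).toNat, by simp; omega, by simp; omega⟩]
          have hrev : C (p - n : ℤ) (a + b - c - i : ℤ) *
              C (a - c + (b - i) : ℤ) (n - c - i : ℤ) =
              C (p - n : ℤ) (a + b - n : ℤ) * C (p - a - b : ℤ) (n - c - i : ℤ) := by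
            rw [show (a - c + (b - i) : ℤ) = a + b - c - i by ring, C_symm (a + b - c - i : ℤ),
              C_mul]
            congr 2 <;> ring
          linear_combination C a c * C b i * hrev
        · rw [C_eq_zero_iff.2 (Or.inr (by omega : (b : ℤ) < i))]
          ring
    _ = _ := by
        rw [← mul_sum, sum_C_mul_C_sub_comp hcast (by omega) (by omega) _
          fun j _ _ _ => ⟨j.toNat, by simp; omega, by omega⟩,
          show (b + (p - a - b) : ℤ) = p - a by ring]
        ring

theorem stmt_8 (a b c n p : ℕ) :
    ∑ k ∈ Finset.range (n + 1), C a k * C b ((n : ℤ) - k) * C k c * C ((p : ℤ) - k) ((a : ℤ) + b - c) = C ((p : ℤ) - n) ((a : ℤ) + b - n) * C ((p : ℤ) - a) ((n : ℤ) - c) * C a c := by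
  by_cases h : c ≤ a ∧ a + b ≤ p ∧ n ≤ a + b
  · exact sum_C_mul_C_mul_C_mul_C_of_le h.1 h.2.1 h.2.2
  rw [sum_eq_zero fun k _ => ?_, eq_comm] <;>
    by_contra h' <;> simp only [mul_eq_zero, C_eq_zero_iff, not_or] at h' <;> omega
end
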